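/- In every step of the erase process on s+t+1 vertices, the quantity s_i = f_i + 2 c_i strictly increases: s_i ≥ s_{i−1} + 1 for every i, where f_i and c_i denote the number of hyperedges and the number of connected components (counting isolated vertices) of the auxiliary hyperforest H_i. Equivalently, for each step there is a nonnegative integer λ and a vector v ∈ {(1,0), (1,1), (0,1), (−1,1)} with (f_i, c_i) = (f_{i−1}, c_{i−1}) + v + (λ, 0). -/

import Mathlib

open SimpleGraph
/-- The vertex sets of the connected components of the subgraph of `G` induced on
`F`, viewed as subsets of `V`. -/
def hyperComps {V : Type*} (G : SimpleGraph V) (F : Set V) : Set (Set V) :=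
  {C | ∃ cc : (G.induce F).ConnectedComponent, C = Subtype.val '' cc.supp}

/-- The edge-operation: the unique hyperedge `F` containing both endpoints of the
erased edge `e` is replaced by the connected components of size `> 1` of the induced
subgraph of the new graph `G'` on `F`. -/
def edgeOp {V : Type*} (G' : SimpleGraph V) (e : Sym2 V) (H : Set (Set V)) :
    Set (Set V) :=
  {F ∈ H | ¬ ∀ x ∈ e, x ∈ F} ∪
    ⋃ F ∈ {F ∈ H | ∀ x ∈ e, x ∈ F}, {C ∈ hyperComps G' F | 1 < C.ncard}

/-- The vertex-operation: every hyperedge `F` containing the closed vertex `v` is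
replaced by the sets `F₁ ∪ {v}, …, F_h ∪ {v}` where `F₁, …, F_h` are the connected
components of `G'[F ∖ {v}]`. -/
def vertexOp {V : Type*} (G' : SimpleGraph V) (v : V) (H : Set (Set V)) :
    Set (Set V) :=
  {F ∈ H | v ∉ F} ∪
    ⋃ F ∈ {F ∈ H | v ∈ F}, (fun C => C ∪ {v}) '' hyperComps G' (F \ {v})

/-- One step of the hyperforest update: the edge-operation for the erased edge `e`,
followed by the vertex-operations for the closed vertex `v`. -/
def hstep {V : Type*} (G' : SimpleGraph V) (e : Sym2 V) (v : V) (H : Set (Set V)) :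
    Set (Set V) :=
  vertexOp G' v (edgeOp G' e H)

/-- The initial hypergraph `H₀`: one hyperedge per connected component of `G`
of size at least two. -/
def initialHyper {V : Type*} (G : SimpleGraph V) : Set (Set V) :=
  {C | (∃ cc : G.ConnectedComponent, C = cc.supp) ∧ 1 < C.ncard}

/-- The graph associated with a hypergraph `H`: two distinct vertices are adjacent
iff they lie in a common hyperedge. Its connected components (including isolated
vertices) are the connected components of `H`. -/
def hyperGraphOf {V : Type*} (H : Set (Set V)) : SimpleGraph V :=
  SimpleGraph.fromRel fun u v => ∃ F ∈ H, u ∈ F ∧ v ∈ F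

/-!
Along the process, `H i` stays a linear hypergraph whose hyperedges have at least two vertices,
induce connected subgraphs of `c i` and cover its edges, so that its components are those of
`c i`; and it stays a hyperforest, in the counting form `∑_{F ∈ H i} (|F| - 1) + #components(c i) ≤ |V|`
(the reverse inequality holds for every hypergraph).

Let `F₀` be the hyperedge containing the erased edge `xy`. Since no edge joins the two sides of
the witness partition any more, every path from `x` to `y` passes through the closed vertex `w`.
If `x` and `y` stay connected inside `F₀`, the edge-operation changes nothing and `w ∈ F₀`, so
`F₀ \ {w}` splits and the vertex-operation creates a new hyperedge, while the components do not
change. Otherwise `F₀` splits, lowering `∑ (|F| - 1)` by at least one; the vertex-operations never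
raise it, so the hyperforest inequality forces a new component (exactly one, as a single edge was
deleted), while at most the hyperedge `F₀` is lost.
-/

lemma Set.ncard_le_ncard_of_rel {α β : Type*} {A : Set α} {B : Set β} (hB : B.Finite)
    {r : β → α → Prop} (hcover : ∀ a ∈ A, ∃ b ∈ B, r b a)
    (hunique : ∀ b ∈ B, ∀ a ∈ A, ∀ a' ∈ A, r b a → r b a' → a = a') : A.ncard ≤ B.ncard := by
  rcases A.eq_empty_or_nonempty with rfl | ⟨a, ha⟩
  · simp
  have : Nonempty β := let ⟨b, _⟩ := hcover a ha; ⟨b⟩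
  choose! g hgB hgr using hcover
  exact Set.ncard_le_ncard_of_injOn g hgB (fun a ha a' ha' h =>
    hunique _ (hgB a ha) a ha a' ha' (hgr a ha) (h ▸ hgr a' ha')) hB

lemma Set.ncard_lt_ncard_of_rel {α β : Type*} {A : Set α} {B : Set β} (hB : B.Finite)
    {r : β → α → Prop} (hcover : ∀ a ∈ A, ∃ b ∈ B, r b a)
    (hunique : ∀ b ∈ B, ∀ a ∈ A, ∀ a' ∈ A, r b a → r b a' → a = a')
    (hsplit : ∃ a ∈ A, ∃ b ∈ B, ∃ b' ∈ B, b ≠ b' ∧ r b a ∧ r b' a) : A.ncard < B.ncard := by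
  obtain ⟨a₀, ha₀, b, hb, b', hb', hne, hr, hr'⟩ := hsplit
  refine (Set.ncard_le_ncard_of_rel hB.sdiff (fun a ha => ?_) fun c hc => hunique c hc.1).trans_lt
    (Set.ncard_sdiff_singleton_lt_of_mem hb hB)
  obtain ⟨c, hc, hrc⟩ := hcover a ha
  by_cases hcb : c = b
  · subst hcb
    exact ⟨b', ⟨hb', Ne.symm hne⟩, hunique c hc a₀ ha₀ a ha hr hrc ▸ hr'⟩
  · exact ⟨c, ⟨hc, hcb⟩, hrc⟩

section ReachableWithin

variable {V : Type*} {G : SimpleGraph V} {F F' : Set V} {u v w x y : V}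

def ReachableWithin (G : SimpleGraph V) (F : Set V) : V → V → Prop :=
  Relation.ReflTransGen fun a b => G.Adj a b ∧ a ∈ F ∧ b ∈ F

namespace ReachableWithin

lemma refl : ReachableWithin G F u u := Relation.ReflTransGen.refl

lemma single (h : G.Adj u v) (hu : u ∈ F) (hv : v ∈ F) : ReachableWithin G F u v :=
  Relation.ReflTransGen.single ⟨h, hu, hv⟩

lemma trans (h : ReachableWithin G F u v) (h' : ReachableWithin G F v w) :
    ReachableWithin G F u w :=
  Relation.ReflTransGen.trans h h'

lemma symm (h : ReachableWithin G F u v) : ReachableWithin G F v u := by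
  induction h with
  | refl => exact refl
  | tail _ hab ih => exact (single hab.1.symm hab.2.2 hab.2.1).trans ih

lemma mono (hF : F ⊆ F') (h : ReachableWithin G F u v) : ReachableWithin G F' u v :=
  Relation.ReflTransGen.mono (fun _ _ h => ⟨h.1, hF h.2.1, hF h.2.2⟩) _ _ h

lemma reachable (h : ReachableWithin G F u v) : G.Reachable u v :=
  (reachable_iff_reflTransGen u v).mpr (Relation.ReflTransGen.mono (fun _ _ h => h.1) _ _ h)

lemma deleteEdges (h : ReachableWithin G F u v)
    (hxy : x ∈ F → y ∈ F → ReachableWithin (G.deleteEdges {s(x, y)}) F x y) :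
    ReachableWithin (G.deleteEdges {s(x, y)}) F u v := by
  induction h with
  | refl => exact refl
  | @tail a b _ hab ih =>
    by_cases he : s(a, b) = s(x, y)
    · rcases Sym2.eq_iff.mp he with ⟨rfl, rfl⟩ | ⟨rfl, rfl⟩
      · exact ih.trans (hxy hab.2.1 hab.2.2)
      · exact ih.trans (hxy hab.2.2 hab.2.1).symm
    · exact ih.trans (single (by simp [hab.1, he]) hab.2.1 hab.2.2)

lemma reachable_induce (h : ReachableWithin G F u v) (hu : u ∈ F) (hv : v ∈ F) :
    (G.induce F).Reachable ⟨u, hu⟩ ⟨v, hv⟩ := by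
  induction h with
  | refl => rfl
  | tail _ hab ih => exact (ih hab.2.1).trans (Adj.reachable (by simpa using hab.1))

lemma of_reachable_induce {u v : F} (h : (G.induce F).Reachable u v) :
    ReachableWithin G F u v := by
  obtain ⟨p⟩ := h
  induction p with
  | nil => exact refl
  | cons h _ ih => exact (single (by simpa using h) (Subtype.prop _) (Subtype.prop _)).trans ih

end ReachableWithin

lemma reachableWithin_iff_reachable_induce {u v : F} :
    ReachableWithin G F u v ↔ (G.induce F).Reachable u v :=
  ⟨fun h => h.reachable_induce u.2 v.2, .of_reachable_induce⟩

lemma SimpleGraph.Reachable.reachableWithin_supp (h : G.Reachable u v) :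
    ReachableWithin G (G.connectedComponentMk u).supp u v := by
  obtain ⟨p⟩ := h
  induction p with
  | nil => exact .refl
  | @cons a b _ hab _ ih =>
    have hK : G.connectedComponentMk a = G.connectedComponentMk b :=
      ConnectedComponent.eq.mpr hab.reachable
    rw [hK]
    exact (ReachableWithin.single hab (by simp [hK]) (by simp)).trans ih

lemma not_reachableWithin_compl_singleton {V₁ V₂ : Set V} (hdisj : Disjoint V₁ V₂)
    (hcover : V₁ ∪ V₂ ∪ {w} = Set.univ) (hcross : ∀ a ∈ V₁, ∀ b ∈ V₂, ¬ G.Adj a b)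
    (hx : x ∈ V₁) (hy : y ∈ V₂) : ¬ ReachableWithin G {w}ᶜ x y := by
  have hstay : ∀ z, ReachableWithin G {w}ᶜ x z → z ∈ V₁ := by
    intro z hz
    induction hz with
    | refl => exact hx
    | @tail a b _ hab ih =>
      have hb : b ∈ V₁ ∪ V₂ ∪ {w} := hcover ▸ Set.mem_univ b
      rcases hb with (hb | hb) | hb
      · exact hb
      · exact absurd hab.1 (hcross a ih b hb)
      · exact absurd hb hab.2.2
  exact fun h => hdisj.notMem_of_mem_left (hstay y h) hy

end ReachableWithin

section HyperComps

variable {V : Type*} {G : SimpleGraph V} {F C C' : Set V} {u v w : V}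

lemma image_val_supp_induce (u : F) :
    Subtype.val '' ((G.induce F).connectedComponentMk u).supp =
      {v | v ∈ F ∧ ReachableWithin G F u v} := by
  ext v
  simp only [Set.mem_image, ConnectedComponent.mem_supp_iff, ConnectedComponent.eq,
    Set.mem_ofPred_eq]
  constructor
  · rintro ⟨v, hv, rfl⟩
    exact ⟨v.2, reachableWithin_iff_reachable_induce.mpr hv.symm⟩
  · rintro ⟨hv, h⟩
    exact ⟨⟨v, hv⟩, (reachableWithin_iff_reachable_induce.mp h).symm, rfl⟩

lemma mem_hyperComps_iff :
    C ∈ hyperComps G F ↔ ∃ u ∈ F, C = {v | v ∈ F ∧ ReachableWithin G F u v} := by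
  constructor
  · rintro ⟨K, rfl⟩
    induction K using ConnectedComponent.ind with | h u =>
    exact ⟨u, u.2, image_val_supp_induce u⟩
  · rintro ⟨u, hu, rfl⟩
    exact ⟨_, (image_val_supp_induce ⟨u, hu⟩).symm⟩

lemma subset_of_mem_hyperComps (hC : C ∈ hyperComps G F) : C ⊆ F := by
  obtain ⟨u, -, rfl⟩ := mem_hyperComps_iff.mp hC
  exact fun _ hv => hv.1

lemma exists_mem_hyperComps (hu : u ∈ F) : ∃ C ∈ hyperComps G F, u ∈ C :=
  ⟨_, mem_hyperComps_iff.mpr ⟨u, hu, rfl⟩, hu, .refl⟩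

lemma mem_hyperComps_iff_reachableWithin (hC : C ∈ hyperComps G F) (hu : u ∈ C) (hv : v ∈ F) :
    v ∈ C ↔ ReachableWithin G F u v := by
  obtain ⟨u₀, -, rfl⟩ := mem_hyperComps_iff.mp hC
  exact ⟨fun h => hu.2.symm.trans h.2, fun h => ⟨hv, hu.2.trans h⟩⟩

lemma nonempty_of_mem_hyperComps (hC : C ∈ hyperComps G F) : C.Nonempty := by
  obtain ⟨u, hu, rfl⟩ := mem_hyperComps_iff.mp hC
  exact ⟨u, hu, .refl⟩

lemma eq_of_mem_hyperComps (hC : C ∈ hyperComps G F) (hC' : C' ∈ hyperComps G F)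
    (hu : u ∈ C) (hu' : u ∈ C') : C = C' := by
  obtain ⟨a, -, rfl⟩ := mem_hyperComps_iff.mp hC
  obtain ⟨b, -, rfl⟩ := mem_hyperComps_iff.mp hC'
  exact Set.ext fun _ => and_congr_right fun _ =>
    ⟨fun h => hu'.2.trans (hu.2.symm.trans h), fun h => hu.2.trans (hu'.2.symm.trans h)⟩

lemma mem_hyperComps_of_adj (hC : C ∈ hyperComps G F) (hu : u ∈ C) (hv : v ∈ F)
    (h : G.Adj u v) : v ∈ C :=
  (mem_hyperComps_iff_reachableWithin hC hu hv).mpr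
    (.single h (subset_of_mem_hyperComps hC hu) hv)

lemma reachableWithin_of_mem_hyperComps (hC : C ∈ hyperComps G F) (hu : u ∈ C) (hv : v ∈ C) :
    ReachableWithin G C u v := by
  have h := (mem_hyperComps_iff_reachableWithin hC hu (subset_of_mem_hyperComps hC hv)).mp hv
  clear hv
  induction h with
  | refl => exact .refl
  | @tail a b _ hab ih =>
    have ha : a ∈ C := (mem_hyperComps_iff_reachableWithin hC hu hab.2.1).mpr ‹_›
    exact ih.trans (.single hab.1 ha (mem_hyperComps_of_adj hC ha hab.2.2 hab.1))

lemma hyperComps_eq_singleton (hF : F.Nonempty)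
    (hconn : ∀ u ∈ F, ∀ v ∈ F, ReachableWithin G F u v) : hyperComps G F = {F} := by
  have hall : ∀ C ∈ hyperComps G F, C = F := by
    intro C hC
    obtain ⟨u, hu⟩ := nonempty_of_mem_hyperComps hC
    exact (subset_of_mem_hyperComps hC).antisymm fun v hv =>
      (mem_hyperComps_iff_reachableWithin hC hu hv).mpr
        (hconn u (subset_of_mem_hyperComps hC hu) v hv)
  obtain ⟨u, hu⟩ := hF
  obtain ⟨C, hC, -⟩ := exists_mem_hyperComps (G := G) hu
  exact Set.eq_singleton_iff_unique_mem.mpr ⟨hall C hC ▸ hC, hall⟩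

lemma pairwiseDisjoint_hyperComps : (hyperComps G F).PairwiseDisjoint id :=
  fun _ hC _ hC' hne => Set.disjoint_left.mpr fun _ hu hu' =>
    hne (eq_of_mem_hyperComps hC hC' hu hu')

lemma sUnion_hyperComps : ⋃₀ hyperComps G F = F :=
  (Set.sUnion_subset fun _ => subset_of_mem_hyperComps).antisymm fun _ hu =>
    let ⟨C, hC, huC⟩ := exists_mem_hyperComps (G := G) hu
    ⟨C, hC, huC⟩

lemma notMem_of_mem_hyperComps_sdiff (hC : C ∈ hyperComps G (F \ {w})) : w ∉ C :=
  fun hw => (subset_of_mem_hyperComps hC hw).2 rfl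

lemma union_singleton_injOn : Set.InjOn (· ∪ {w}) (hyperComps G (F \ {w})) := by
  intro C hC C' hC' h
  simp only [Set.union_singleton] at h
  rw [← Set.insert_sdiff_self_of_notMem (notMem_of_mem_hyperComps_sdiff hC), h,
    Set.insert_sdiff_self_of_notMem (notMem_of_mem_hyperComps_sdiff hC')]

lemma union_singleton_subset (hC : C ∈ hyperComps G (F \ {w})) (hw : w ∈ F) : C ∪ {w} ⊆ F :=
  Set.union_subset ((subset_of_mem_hyperComps hC).trans Set.sdiff_subset)
    (Set.singleton_subset_iff.mpr hw)

end HyperComps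

section Weight

variable {V : Type*} {G : SimpleGraph V} {H A B P : Set (Set V)} {F F₀ : Set V} {w : V}

noncomputable def weight (H : Set (Set V)) : ℕ := ∑ᶠ F ∈ H, (F.ncard - 1)

variable [Finite V]

lemma weight_insert (hF : F ∉ H) : weight (insert F H) = F.ncard - 1 + weight H :=
  finsum_mem_insert _ hF H.toFinite

lemma weight_union (h : Disjoint A B) : weight (A ∪ B) = weight A + weight B :=
  finsum_mem_union h A.toFinite B.toFinite

lemma weight_union_le (A B : Set (Set V)) : weight (A ∪ B) ≤ weight A + weight B := by
  have := finsum_mem_union_inter (f := fun F : Set V => F.ncard - 1) A.toFinite B.toFinite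
  unfold weight
  omega

lemma weight_mono (h : A ⊆ B) : weight A ≤ weight B := by
  rw [← Set.union_sdiff_cancel h, weight_union Set.disjoint_sdiff_right]
  exact Nat.le_add_right _ _

lemma weight_biUnion_le {ι : Type*} {T : Set ι} (hT : T.Finite) (g : ι → Set (Set V)) :
    weight (⋃ i ∈ T, g i) ≤ ∑ᶠ i ∈ T, weight (g i) := by
  induction T, hT using Set.Finite.induction_on with
  | empty => simp [weight]
  | @insert i T hi hT ih =>
    rw [Set.biUnion_insert, finsum_mem_insert _ hi hT]
    exact (weight_union_le _ _).trans (Nat.add_le_add_left ih _)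

lemma weight_add_ncard (hP : P.PairwiseDisjoint id) (hne : ∀ C ∈ P, C.Nonempty) :
    weight P + P.ncard = (⋃₀ P).ncard := by
  rw [Set.sUnion_eq_biUnion,
    P.toFinite.ncard_biUnion (s := fun C => C) (fun _ _ => Set.toFinite _) hP, weight,
    ← finsum_one, ← finsum_mem_add_distrib P.toFinite]
  exact finsum_mem_congr rfl fun C hC => Nat.sub_add_cancel (hne C hC).ncard_pos

lemma finsum_ncard_hyperComps : ∑ᶠ C ∈ hyperComps G F, C.ncard = F.ncard := by
  rw [← Set.Finite.ncard_biUnion (s := fun C => C) (Set.toFinite _) (fun _ _ => Set.toFinite _)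
    pairwiseDisjoint_hyperComps, ← Set.sUnion_eq_biUnion, sUnion_hyperComps]

lemma weight_hyperComps_add_ncard :
    weight (hyperComps G F) + (hyperComps G F).ncard = F.ncard := by
  rw [weight_add_ncard pairwiseDisjoint_hyperComps fun _ => nonempty_of_mem_hyperComps,
    sUnion_hyperComps]

lemma weight_image_union_singleton (hw : w ∈ F) :
    weight ((· ∪ {w}) '' hyperComps G (F \ {w})) = F.ncard - 1 := by
  rw [weight, finsum_mem_image union_singleton_injOn,
    finsum_mem_congr rfl fun C hC => by
      rw [Set.union_singleton, Set.ncard_insert_of_notMem (notMem_of_mem_hyperComps_sdiff hC),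
        Nat.add_sub_cancel],
    finsum_ncard_hyperComps, Set.ncard_sdiff_singleton_of_mem hw]

lemma weight_vertexOp_le (G : SimpleGraph V) (w : V) (H : Set (Set V)) :
    weight (vertexOp G w H) ≤ weight H :=
  calc weight (vertexOp G w H)
      ≤ weight {F ∈ H | w ∉ F} +
          ∑ᶠ F ∈ {F ∈ H | w ∈ F}, weight ((· ∪ {w}) '' hyperComps G (F \ {w})) :=
        (weight_union_le _ _).trans (Nat.add_le_add_left (weight_biUnion_le (Set.toFinite _) _) _)
    _ = weight {F ∈ H | w ∉ F} + weight {F ∈ H | w ∈ F} := by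
        rw [finsum_mem_congr rfl fun F hF => weight_image_union_singleton hF.2]; rfl
    _ = weight H := by
        rw [← weight_union (Set.disjoint_left.mpr fun _ h h' => h.2 h'.2)]
        congr 1
        ext F
        by_cases hw : w ∈ F <;> simp [hw]

lemma weight_edgeOp_lt (hF₀ : F₀ ∈ H) (hcomps : 1 < (hyperComps G F₀).ncard) :
    weight ((H \ {F₀}) ∪ {C ∈ hyperComps G F₀ | 1 < C.ncard}) < weight H := by
  have hsplit : weight H = F₀.ncard - 1 + weight (H \ {F₀}) := by
    rw [← weight_insert fun h => h.2 rfl, Set.insert_sdiff_singleton, Set.insert_eq_of_mem hF₀]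
  have := weight_union_le (H \ {F₀}) {C ∈ hyperComps G F₀ | 1 < C.ncard}
  have := weight_mono (Set.sep_subset (hyperComps G F₀) fun C => 1 < C.ncard)
  have := weight_hyperComps_add_ncard (G := G) (F := F₀)
  omega

end Weight

section ComponentCount

variable {V : Type*} {G G' : SimpleGraph V} {F : Set V} {x y : V}

lemma SimpleGraph.Reachable.of_forall_adj_reachable
    (hadj : ∀ u v, G.Adj u v → G'.Reachable u v) {u v : V} (h : G.Reachable u v) :
    G'.Reachable u v := by
  rw [reachable_iff_reflTransGen] at h ⊢
  exact Relation.ReflTransGen.lift' id (fun a b hab => (reachable_iff_reflTransGen a b).mp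
    (hadj a b hab)) _ _ h

lemma card_connectedComponent_congr (h : ∀ u v, G.Reachable u v ↔ G'.Reachable u v) :
    Nat.card G.ConnectedComponent = Nat.card G'.ConnectedComponent :=
  Nat.card_congr (Quot.congrRight h)

lemma card_connectedComponent_deleteEdges_of_reachable
    (h : (G.deleteEdges {s(x, y)}).Reachable x y) :
    Nat.card (G.deleteEdges {s(x, y)}).ConnectedComponent = Nat.card G.ConnectedComponent := by
  refine card_connectedComponent_congr fun u v =>
    ⟨fun h => h.mono (deleteEdges_le _), .of_forall_adj_reachable fun a b hab => ?_⟩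
  by_cases he : s(a, b) = s(x, y)
  · rcases Sym2.eq_iff.mp he with ⟨rfl, rfl⟩ | ⟨rfl, rfl⟩
    exacts [h, h.symm]
  · exact Adj.reachable (by simp [hab, he])

lemma SimpleGraph.Reachable.reachable_or_exists_mem {G'' : SimpleGraph V}
    (hadj : ∀ u v, G''.Adj u v → G.Adj u v ∨ u ∈ F ∧ v ∈ F) (h : G''.Reachable x y) :
    G.Reachable x y ∨ ∃ u ∈ F, G.Reachable x u := by
  obtain ⟨p⟩ := h
  induction p with
  | nil => exact .inl .rfl
  | @cons a b _ hab _ ih =>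
    rcases hadj a b hab with hab | ⟨ha, -⟩
    · exact ih.imp hab.reachable.trans fun ⟨u, hu, hbu⟩ => ⟨u, hu, hab.reachable.trans hbu⟩
    · exact .inr ⟨a, ha, .rfl⟩

variable [Finite V]

/-- The components of `G` avoiding `F` are mapped injectively to components of `G''` avoiding
`F`. -/
lemma card_connectedComponent_add_one_le {G'' : SimpleGraph V} (hle : G ≤ G'')
    (hadj : ∀ u v, G''.Adj u v → G.Adj u v ∨ u ∈ F ∧ v ∈ F) (hF : F.Nonempty) :
    Nat.card G.ConnectedComponent + 1 ≤ Nat.card G''.ConnectedComponent + F.ncard := by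
  obtain ⟨v₀, hv₀⟩ := hF
  set φ := ConnectedComponent.map (Hom.ofLE hle)
  set S := G.connectedComponentMk '' F
  have hkey : ∀ K ∈ Sᶜ, ∀ d, φ K = G''.connectedComponentMk d → K = G.connectedComponentMk d := by
    intro K hK d hKd
    induction K using ConnectedComponent.ind with | h c =>
    have hcd : G''.Reachable c d := ConnectedComponent.eq.mp hKd
    rcases hcd.reachable_or_exists_mem hadj with h | ⟨u, hu, hcu⟩
    · exact ConnectedComponent.eq.mpr h
    · exact absurd ⟨u, hu, ConnectedComponent.eq.mpr hcu.symm⟩ hK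
  have hinj : Set.InjOn φ Sᶜ := fun K hK K' _ h => by
    induction K' using ConnectedComponent.ind with | h d =>
    exact hkey K hK d h
  have hmaps : Set.MapsTo φ Sᶜ {G''.connectedComponentMk v₀}ᶜ := fun K hK h =>
    hK (hkey K hK v₀ h ▸ ⟨v₀, hv₀, rfl⟩)
  have hcompl : Sᶜ.ncard ≤ Nat.card G''.ConnectedComponent - 1 := by
    rw [← hinj.ncard_image, ← Set.ncard_singleton (G''.connectedComponentMk v₀),
      ← Set.ncard_compl]
    exact Set.ncard_le_ncard hmaps.image_subset
  have hS : S.ncard ≤ F.ncard := Set.ncard_image_le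
  have : Nonempty G''.ConnectedComponent := ⟨G''.connectedComponentMk v₀⟩
  have hpos : 0 < Nat.card G''.ConnectedComponent := Nat.card_pos
  have := Set.ncard_add_ncard_compl S
  omega

lemma card_connectedComponent_deleteEdges_le (G : SimpleGraph V) (x y : V) :
    Nat.card (G.deleteEdges {s(x, y)}).ConnectedComponent ≤ Nat.card G.ConnectedComponent + 1 := by
  have := card_connectedComponent_add_one_le (F := {x, y}) (G.deleteEdges_le {s(x, y)})
    (fun u v huv => ?_) ⟨x, Or.inl rfl⟩
  · have := Set.ncard_insert_le x {y}
    rw [Set.ncard_singleton] at this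
    omega
  · by_cases he : s(u, v) = s(x, y)
    · rcases Sym2.eq_iff.mp he with ⟨rfl, rfl⟩ | ⟨rfl, rfl⟩ <;> simp
    · exact .inl (by simp [huv, he])

end ComponentCount

section HyperGraphOf

variable {V : Type*} {G : SimpleGraph V} {H : Set (Set V)} {F : Set V} {u v : V}

lemma hyperGraphOf_adj : (hyperGraphOf H).Adj u v ↔ u ≠ v ∧ ∃ F ∈ H, u ∈ F ∧ v ∈ F := by
  simp only [hyperGraphOf, fromRel_adj]
  constructor
  · rintro ⟨hne, h | ⟨F, hF, hv, hu⟩⟩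
    exacts [⟨hne, h⟩, ⟨hne, F, hF, hu, hv⟩]
  · exact fun ⟨hne, h⟩ => ⟨hne, .inl h⟩

lemma reachable_hyperGraphOf_iff (hconn : ∀ F ∈ H, ∀ u ∈ F, ∀ v ∈ F, G.Reachable u v)
    (hcover : ∀ u v, G.Adj u v → ∃ F ∈ H, u ∈ F ∧ v ∈ F) :
    (hyperGraphOf H).Reachable u v ↔ G.Reachable u v := by
  refine ⟨.of_forall_adj_reachable fun a b hab => ?_, .of_forall_adj_reachable fun a b hab => ?_⟩
  · obtain ⟨-, F, hF, ha, hb⟩ := hyperGraphOf_adj.mp hab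
    exact hconn F hF a ha b hb
  · obtain ⟨F, hF, ha, hb⟩ := hcover a b hab
    exact (hyperGraphOf_adj.mpr ⟨hab.ne, F, hF, ha, hb⟩).reachable

variable [Finite V]

lemma card_le_weight_add_card_connectedComponent (H : Set (Set V)) :
    Nat.card V ≤ weight H + Nat.card (hyperGraphOf H).ConnectedComponent := by
  induction H, H.toFinite using Set.Finite.induction_on with
  | empty =>
    have hbot : hyperGraphOf (∅ : Set (Set V)) = ⊥ := by ext; simp [hyperGraphOf_adj]
    rw [hbot, weight, finsum_mem_empty, zero_add]
    exact Nat.card_le_card_of_injective _ fun u v h =>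
      reachable_bot.mp (ConnectedComponent.eq.mp h)
  | @insert F H hF _ ih =>
    rw [weight_insert hF]
    rcases F.eq_empty_or_nonempty with rfl | hne
    · have heq : hyperGraphOf (insert ∅ H) = hyperGraphOf H := by ext; simp [hyperGraphOf_adj]
      rw [heq]
      omega
    · have := card_connectedComponent_add_one_le (F := F) (G := hyperGraphOf H)
        (G'' := hyperGraphOf (insert F H))
        (fun u v huv => hyperGraphOf_adj.mpr <| (hyperGraphOf_adj.mp huv).imp_right
          fun ⟨F', hF', hu, hv⟩ => ⟨F', Set.mem_insert_of_mem _ hF', hu, hv⟩)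
        (fun u v huv => by
          obtain ⟨hne, F', hF', hu, hv⟩ := hyperGraphOf_adj.mp huv
          rcases hF' with rfl | hF'
          exacts [.inr ⟨hu, hv⟩, .inl (hyperGraphOf_adj.mpr ⟨hne, F', hF', hu, hv⟩)])
        hne
      have := hne.ncard_pos
      omega

end HyperGraphOf

section LinearCover

variable {V : Type*} {G : SimpleGraph V} {H : Set (Set V)} {F F' F₀ C C' D : Set V}
  {u v w x y : V}

structure IsLinearCover (G : SimpleGraph V) (H : Set (Set V)) : Prop where
  reachableWithin : ∀ F ∈ H, ∀ u ∈ F, ∀ v ∈ F, ReachableWithin G F u v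
  exists_mem : ∀ ⦃u v⦄, G.Adj u v → ∃ F ∈ H, u ∈ F ∧ v ∈ F
  one_lt_ncard : ∀ F ∈ H, 1 < F.ncard
  subsingleton_inter : ∀ F ∈ H, ∀ F' ∈ H, F ≠ F' → (F ∩ F').Subsingleton

lemma mem_vertexOp_iff : D ∈ vertexOp G w H ↔
    (D ∈ H ∧ w ∉ D) ∨ ∃ F ∈ H, w ∈ F ∧ ∃ C ∈ hyperComps G (F \ {w}), D = C ∪ {w} := by
  simp [vertexOp, eq_comm, and_assoc]

lemma union_singleton_mem_vertexOp (hF : F ∈ H) (hw : w ∈ F)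
    (hC : C ∈ hyperComps G (F \ {w})) : C ∪ {w} ∈ vertexOp G w H :=
  mem_vertexOp_iff.mpr (.inr ⟨F, hF, hw, C, hC, rfl⟩)

lemma exists_adj_of_mem_hyperComps_sdiff (hC : C ∈ hyperComps G (F \ {w})) (hu : u ∈ C)
    (h : ReachableWithin G F u w) : ∃ z ∈ C, G.Adj z w := by
  induction h using Relation.ReflTransGen.head_induction_on with
  | refl => exact absurd hu (notMem_of_mem_hyperComps_sdiff hC)
  | @head a b hab _ ih =>
    by_cases hb : b = w
    · exact ⟨a, hu, hb ▸ hab.1⟩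
    · exact ih (mem_hyperComps_of_adj hC hu ⟨hab.2.2, hb⟩ hab.1)

lemma reachableWithin_union_singleton (hconn : ∀ u ∈ F, ∀ v ∈ F, ReachableWithin G F u v)
    (hw : w ∈ F) (hC : C ∈ hyperComps G (F \ {w})) (hu : u ∈ C ∪ {w}) (hv : v ∈ C ∪ {w}) :
    ReachableWithin G (C ∪ {w}) u v := by
  have hto : ∀ u ∈ C ∪ {w}, ReachableWithin G (C ∪ {w}) u w := by
    rintro u (hu | rfl)
    · obtain ⟨z, hz, hzw⟩ := exists_adj_of_mem_hyperComps_sdiff hC hu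
        (hconn u (subset_of_mem_hyperComps hC hu).1 w hw)
      exact ((reachableWithin_of_mem_hyperComps hC hu hz).mono Set.subset_union_left).trans
        (.single hzw (.inl hz) (.inr rfl))
    · exact .refl
  exact (hto u hu).trans (hto v hv).symm

namespace IsLinearCover

lemma eq_of_mem (hH : IsLinearCover G H) (hF : F ∈ H) (hF' : F' ∈ H) (hx : x ∈ F) (hx' : x ∈ F')
    (hy : y ∈ F) (hy' : y ∈ F') (hxy : x ≠ y) : F = F' :=
  by_contra fun hne => hxy (hH.subsingleton_inter F hF F' hF' hne ⟨hx, hx'⟩ ⟨hy, hy'⟩)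

lemma card_connectedComponent_hyperGraphOf (hH : IsLinearCover G H) :
    Nat.card (hyperGraphOf H).ConnectedComponent = Nat.card G.ConnectedComponent :=
  card_connectedComponent_congr fun _ _ => reachable_hyperGraphOf_iff
    (fun F hF u hu v hv => (hH.reachableWithin F hF u hu v hv).reachable)
    (fun _ _ h => hH.exists_mem h)

lemma edgeOp_eq (hH : IsLinearCover G H) (hF₀ : F₀ ∈ H) (hx : x ∈ F₀) (hy : y ∈ F₀) (hxy : x ≠ y)
    (G' : SimpleGraph V) :
    edgeOp G' s(x, y) H = (H \ {F₀}) ∪ {C ∈ hyperComps G' F₀ | 1 < C.ncard} := by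
  have hsel : ∀ F ∈ H, (∀ z ∈ s(x, y), z ∈ F) ↔ F = F₀ := fun F hF => by
    simp only [Sym2.mem_iff, forall_eq_or_imp, forall_eq]
    exact ⟨fun ⟨hxF, hyF⟩ => hH.eq_of_mem hF hF₀ hxF hx hyF hy hxy, fun h => h ▸ ⟨hx, hy⟩⟩
  have hkeep : {F ∈ H | ¬ ∀ z ∈ s(x, y), z ∈ F} = H \ {F₀} :=
    Set.ext fun F => and_congr_right fun hF => not_congr (hsel F hF)
  have hcut : {F ∈ H | ∀ z ∈ s(x, y), z ∈ F} = {F₀} :=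
    Set.ext fun F => ⟨fun ⟨hF, h⟩ => (hsel F hF).mp h,
      fun h => (Set.mem_singleton_iff.mp h) ▸ ⟨hF₀, (hsel F₀ hF₀).mpr rfl⟩⟩
  rw [edgeOp, hkeep, hcut, Set.biUnion_singleton]

lemma exists_mem_vertexOp_subset (hH : IsLinearCover G H) (hF : F ∈ H) :
    ∃ D ∈ vertexOp G w H, D ⊆ F := by
  by_cases hw : w ∈ F
  · have : (F \ {w}).ncard = F.ncard - 1 := Set.ncard_sdiff_singleton_of_mem hw
    obtain ⟨z, hz⟩ := Set.nonempty_of_ncard_ne_zero (by have := hH.one_lt_ncard F hF; omega :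
      (F \ {w}).ncard ≠ 0)
    obtain ⟨C, hC, -⟩ := exists_mem_hyperComps (G := G) hz
    exact ⟨C ∪ {w}, union_singleton_mem_vertexOp hF hw hC, union_singleton_subset hC hw⟩
  · exact ⟨F, mem_vertexOp_iff.mpr (.inl ⟨hF, hw⟩), subset_rfl⟩

variable [Finite V]

lemma eq_of_subset (hH : IsLinearCover G H) (hF : F ∈ H) (hF' : F' ∈ H) (hD : 1 < D.ncard)
    (h : D ⊆ F) (h' : D ⊆ F') : F = F' :=
  let ⟨_, _, ha, hb, hab⟩ := (Set.one_lt_ncard_iff).mp hD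
  hH.eq_of_mem hF hF' (h ha) (h' ha) (h hb) (h' hb) hab

lemma edgeOp (hH : IsLinearCover G H) (hxy : G.Adj x y) :
    IsLinearCover (G.deleteEdges {s(x, y)}) (edgeOp (G.deleteEdges {s(x, y)}) s(x, y) H) := by
  obtain ⟨F₀, hF₀, hx, hy⟩ := hH.exists_mem hxy
  rw [hH.edgeOp_eq hF₀ hx hy hxy.ne]
  constructor
  · rintro F (⟨hF, hne⟩ | ⟨hC, -⟩) u hu v hv
    · exact (hH.reachableWithin F hF u hu v hv).deleteEdges fun hxF hyF =>
        absurd (hH.eq_of_mem hF hF₀ hxF hx hyF hy hxy.ne) hne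
    · exact reachableWithin_of_mem_hyperComps hC hu hv
  · intro u v huv
    obtain ⟨F, hF, hu, hv⟩ := hH.exists_mem (deleteEdges_adj.mp huv).1
    by_cases hFF₀ : F = F₀
    · subst hFF₀
      obtain ⟨C, hC, huC⟩ := exists_mem_hyperComps (G := G.deleteEdges {s(x, y)}) hu
      have hvC := mem_hyperComps_of_adj hC huC hv huv
      exact ⟨C, .inr ⟨hC, (Set.one_lt_ncard_iff).mpr ⟨u, v, huC, hvC, huv.ne⟩⟩, huC, hvC⟩
    · exact ⟨F, .inl ⟨hF, hFF₀⟩, hu, hv⟩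
  · rintro F (⟨hF, -⟩ | ⟨-, h⟩)
    exacts [hH.one_lt_ncard F hF, h]
  · rintro F (⟨hF, hne⟩ | ⟨hC, -⟩) F' (⟨hF', hne'⟩ | ⟨hC', -⟩) hFF'
    · exact hH.subsingleton_inter F hF F' hF' hFF'
    · exact (hH.subsingleton_inter F hF F₀ hF₀ hne).anti
        (Set.inter_subset_inter_right _ (subset_of_mem_hyperComps hC'))
    · exact (hH.subsingleton_inter F₀ hF₀ F' hF' (Ne.symm hne')).anti
        (Set.inter_subset_inter_left _ (subset_of_mem_hyperComps hC))
    · have hdisj : Disjoint F F' := pairwiseDisjoint_hyperComps hC hC' hFF'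
      rw [hdisj.inter_eq]
      exact Set.subsingleton_empty

lemma vertexOp (hH : IsLinearCover G H) (w : V) : IsLinearCover G (_root_.vertexOp G w H) := by
  have hold_new : ∀ D ∈ H, w ∉ D → ∀ F ∈ H, w ∈ F → ∀ C ∈ hyperComps G (F \ {w}),
      (D ∩ (C ∪ {w})).Subsingleton := fun D hD hwD F hF hw C hC =>
    (hH.subsingleton_inter D hD F hF (by rintro rfl; exact hwD hw)).anti
      (Set.inter_subset_inter_right _ (union_singleton_subset hC hw))
  constructor
  · intro D hD
    rcases mem_vertexOp_iff.mp hD with ⟨hD, -⟩ | ⟨F, hF, hw, C, hC, rfl⟩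
    · exact hH.reachableWithin D hD
    · exact fun u hu v hv => reachableWithin_union_singleton (hH.reachableWithin F hF) hw hC hu hv
  · have hcover : ∀ F ∈ H, w ∈ F → ∀ u ∈ F, ∀ v ∈ F, G.Adj u v → u ≠ w →
        ∃ D ∈ _root_.vertexOp G w H, u ∈ D ∧ v ∈ D := by
      intro F hF hw u hu v hv huv huw
      obtain ⟨C, hC, huC⟩ := exists_mem_hyperComps (G := G) (F := F \ {w}) ⟨hu, huw⟩
      refine ⟨C ∪ {w}, union_singleton_mem_vertexOp hF hw hC, .inl huC, ?_⟩
      by_cases hvw : v = w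
      · exact .inr hvw
      · exact .inl (mem_hyperComps_of_adj hC huC ⟨hv, hvw⟩ huv)
    intro u v huv
    obtain ⟨F, hF, hu, hv⟩ := hH.exists_mem huv
    by_cases hw : w ∈ F
    · by_cases huw : u = w
      · obtain ⟨D, hD, hvD, huD⟩ :=
          hcover F hF hw v hv u hu huv.symm (huw ▸ huv.ne.symm)
        exact ⟨D, hD, huD, hvD⟩
      · exact hcover F hF hw u hu v hv huv huw
    · exact ⟨F, mem_vertexOp_iff.mpr (.inl ⟨hF, hw⟩), hu, hv⟩
  · intro D hD
    rcases mem_vertexOp_iff.mp hD with ⟨hD, -⟩ | ⟨F, hF, hw, C, hC, rfl⟩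
    · exact hH.one_lt_ncard D hD
    · obtain ⟨z, hz⟩ := nonempty_of_mem_hyperComps hC
      exact (Set.one_lt_ncard_iff).mpr
        ⟨z, w, .inl hz, .inr rfl, (subset_of_mem_hyperComps hC hz).2⟩
  · intro D hD D' hD' hne
    rcases mem_vertexOp_iff.mp hD with ⟨hD, hwD⟩ | ⟨F, hF, hw, C, hC, rfl⟩ <;>
      rcases mem_vertexOp_iff.mp hD' with ⟨hD', hwD'⟩ | ⟨F', hF', hw', C', hC', rfl⟩
    · exact hH.subsingleton_inter D hD D' hD' hne
    · exact hold_new D hD hwD F' hF' hw' C' hC'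
    · exact Set.inter_comm _ _ ▸ hold_new D' hD' hwD' F hF hw C hC
    · by_cases hFF' : F = F'
      · subst hFF'
        have hCC' : C ≠ C' := by rintro rfl; exact hne rfl
        refine (Set.subsingleton_singleton (a := w)).anti ?_
        rintro z ⟨hz | hz, hz' | hz'⟩
        exacts [absurd (eq_of_mem_hyperComps hC hC' hz hz') hCC', hz', hz, hz]
      · exact (hH.subsingleton_inter F hF F' hF' hFF').anti
          (Set.inter_subset_inter (union_singleton_subset hC hw) (union_singleton_subset hC' hw'))

lemma ncard_le_ncard_vertexOp (hH : IsLinearCover G H) (w : V) :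
    H.ncard ≤ (_root_.vertexOp G w H).ncard :=
  Set.ncard_le_ncard_of_rel (Set.toFinite _) (r := (· ⊆ ·))
    (fun _ hF => hH.exists_mem_vertexOp_subset hF)
    fun D hD _ hF _ hF' => hH.eq_of_subset hF hF' ((hH.vertexOp w).one_lt_ncard D hD)

lemma ncard_lt_ncard_vertexOp (hH : IsLinearCover G H) (hF : F ∈ H) (hw : w ∈ F)
    (hC : C ∈ hyperComps G (F \ {w})) (hC' : C' ∈ hyperComps G (F \ {w})) (hne : C ≠ C') :
    H.ncard < (_root_.vertexOp G w H).ncard :=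
  Set.ncard_lt_ncard_of_rel (Set.toFinite _) (r := (· ⊆ ·))
    (fun _ hF => hH.exists_mem_vertexOp_subset hF)
    (fun D hD _ hF _ hF' => hH.eq_of_subset hF hF' ((hH.vertexOp w).one_lt_ncard D hD))
    ⟨F, hF, C ∪ {w}, union_singleton_mem_vertexOp hF hw hC, C' ∪ {w},
      union_singleton_mem_vertexOp hF hw hC', fun h => hne (union_singleton_injOn hC hC' h),
      union_singleton_subset hC hw, union_singleton_subset hC' hw⟩

end IsLinearCover

variable [Finite V]

lemma isLinearCover_initialHyper (G : SimpleGraph V) : IsLinearCover G (initialHyper G) where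
  reachableWithin := by
    rintro _ ⟨⟨K, rfl⟩, -⟩ u hu v hv
    rw [ConnectedComponent.mem_supp_iff] at hu hv
    subst hu
    exact (ConnectedComponent.eq.mp hv.symm).reachableWithin_supp
  exists_mem u v h := by
    have hv : v ∈ (G.connectedComponentMk u).supp :=
      (ConnectedComponent.eq.mpr h.reachable).symm
    exact ⟨_, ⟨⟨_, rfl⟩, (Set.one_lt_ncard_iff).mpr ⟨u, v, rfl, hv, h.ne⟩⟩, rfl, hv⟩
  one_lt_ncard _ hF := hF.2
  subsingleton_inter := by
    rintro _ ⟨⟨K, rfl⟩, -⟩ _ ⟨⟨K', rfl⟩, -⟩ hne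
    rw [(G.pairwise_disjoint_supp_connectedComponent fun h => hne (congrArg _ h)).inter_eq]
    exact Set.subsingleton_empty

lemma weight_initialHyper_add_card_le (G : SimpleGraph V) :
    weight (initialHyper G) + Nat.card G.ConnectedComponent ≤ Nat.card V := by
  have h := weight_add_ncard (P := Set.range ConnectedComponent.supp)
    G.pairwise_disjoint_supp_connectedComponent.range_pairwise
    (by rintro _ ⟨K, rfl⟩; exact K.nonempty_supp)
  rw [Set.sUnion_range, G.iUnion_connectedComponentSupp, Set.ncard_univ,
    Set.ncard_range_of_injective ConnectedComponent.supp_injective] at h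
  have := weight_mono (A := initialHyper G) (B := Set.range ConnectedComponent.supp)
    fun _ hF => by obtain ⟨⟨K, rfl⟩, -⟩ := hF; exact ⟨K, rfl⟩
  omega

end LinearCover

def SemiInvariantStep (f c f' c' : ℕ) : Prop :=
  (f < f' ∧ c' = c) ∨ (f ≤ f' + 1 ∧ c' = c + 1)

section Step

variable {V : Type*} [Finite V] {G G' : SimpleGraph V} {H : Set (Set V)} {F₀ : Set V}
  {w x y : V}

structure IsHyperforestCover (G : SimpleGraph V) (H : Set (Set V)) : Prop
    extends IsLinearCover G H where
  weight_add_card_le : weight H + Nat.card G.ConnectedComponent ≤ Nat.card V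

lemma isHyperforestCover_initialHyper (G : SimpleGraph V) :
    IsHyperforestCover G (initialHyper G) :=
  ⟨isLinearCover_initialHyper G, weight_initialHyper_add_card_le G⟩

namespace IsHyperforestCover

lemma hstep_of_reachableWithin (hH : IsHyperforestCover G H)
    (hG' : G' = G.deleteEdges {s(x, y)}) (hxy : G.Adj x y) (hF₀ : F₀ ∈ H) (hx : x ∈ F₀)
    (hy : y ∈ F₀) (hxw : x ≠ w) (hyw : y ≠ w) (hsep : ¬ ReachableWithin G' {w}ᶜ x y)
    (hreach : ReachableWithin G' F₀ x y) :
    IsHyperforestCover G' (hstep G' s(x, y) w H) ∧ H.ncard < (hstep G' s(x, y) w H).ncard ∧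
      Nat.card G'.ConnectedComponent = Nat.card G.ConnectedComponent := by
  subst hG'
  have hconn : ∀ u ∈ F₀, ∀ v ∈ F₀, ReachableWithin (G.deleteEdges {s(x, y)}) F₀ u v :=
    fun u hu v hv => (hH.reachableWithin F₀ hF₀ u hu v hv).deleteEdges fun _ _ => hreach
  have hsep_self : {C ∈ ({F₀} : Set (Set V)) | 1 < C.ncard} = {F₀} :=
    Set.sep_eq_self_iff_mem_true.mpr fun C hC => (Set.mem_singleton_iff.mp hC) ▸
      hH.one_lt_ncard F₀ hF₀
  have hedge : edgeOp (G.deleteEdges {s(x, y)}) s(x, y) H = H := by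
    rw [hH.edgeOp_eq hF₀ hx hy hxy.ne, hyperComps_eq_singleton ⟨x, hx⟩ hconn, hsep_self,
      Set.sdiff_union_self, Set.union_eq_left.mpr (Set.singleton_subset_iff.mpr hF₀)]
  have hL : IsLinearCover (G.deleteEdges {s(x, y)}) H := hedge ▸ hH.edgeOp hxy
  have hw : w ∈ F₀ := by
    by_contra hw
    exact hsep (hreach.mono fun z hz hzw => hw (hzw ▸ hz))
  obtain ⟨Cx, hCx, hxC⟩ := exists_mem_hyperComps (G := G.deleteEdges {s(x, y)})
    (F := F₀ \ {w}) ⟨hx, hxw⟩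
  obtain ⟨Cy, hCy, hyC⟩ := exists_mem_hyperComps (G := G.deleteEdges {s(x, y)})
    (F := F₀ \ {w}) ⟨hy, hyw⟩
  have hne : Cx ≠ Cy := by
    rintro rfl
    exact hsep (((mem_hyperComps_iff_reachableWithin hCx hxC ⟨hy, hyw⟩).mp hyC).mono
      fun z hz => hz.2)
  have hcard := card_connectedComponent_deleteEdges_of_reachable hreach.reachable
  rw [hstep, hedge]
  refine ⟨⟨hL.vertexOp w, ?_⟩, hL.ncard_lt_ncard_vertexOp hF₀ hw hCx hCy hne, hcard⟩
  have := weight_vertexOp_le (G.deleteEdges {s(x, y)}) w H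
  have := hH.weight_add_card_le
  omega

lemma hstep_of_not_reachableWithin (hH : IsHyperforestCover G H)
    (hG' : G' = G.deleteEdges {s(x, y)}) (hxy : G.Adj x y) (hF₀ : F₀ ∈ H) (hx : x ∈ F₀)
    (hy : y ∈ F₀) (hreach : ¬ ReachableWithin G' F₀ x y) :
    IsHyperforestCover G' (hstep G' s(x, y) w H) ∧ H.ncard ≤ (hstep G' s(x, y) w H).ncard + 1 ∧
      Nat.card G'.ConnectedComponent = Nat.card G.ConnectedComponent + 1 := by
  subst hG'
  have hcard_le := card_connectedComponent_deleteEdges_le G x y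
  set G' := G.deleteEdges {s(x, y)}
  have hL : IsLinearCover G' (edgeOp G' s(x, y) H) := hH.edgeOp hxy
  have hedge := hH.edgeOp_eq hF₀ hx hy hxy.ne G'
  obtain ⟨Cx, hCx, hxC⟩ := exists_mem_hyperComps (G := G') hx
  obtain ⟨Cy, hCy, hyC⟩ := exists_mem_hyperComps (G := G') hy
  have hne : Cx ≠ Cy := by
    rintro rfl
    exact hreach ((mem_hyperComps_iff_reachableWithin hCx hxC hy).mp hyC)
  have hcomps : 1 < (hyperComps G' F₀).ncard :=
    (Set.one_lt_ncard_iff).mpr ⟨Cx, Cy, hCx, hCy, hne⟩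
  have hweight := weight_edgeOp_lt hF₀ hcomps
  rw [← hedge] at hweight
  have hforest := card_le_weight_add_card_connectedComponent (vertexOp G' w (edgeOp G' s(x, y) H))
  rw [(hL.vertexOp w).card_connectedComponent_hyperGraphOf] at hforest
  have := weight_vertexOp_le G' w (edgeOp G' s(x, y) H)
  have := hH.weight_add_card_le
  have hcard : Nat.card G'.ConnectedComponent = Nat.card G.ConnectedComponent + 1 := by omega
  have hlost : H.ncard ≤ (edgeOp G' s(x, y) H).ncard + 1 := by
    have := Set.ncard_le_ncard (hedge ▸ Set.subset_union_left : H \ {F₀} ⊆ edgeOp G' s(x, y) H)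
    rw [Set.ncard_sdiff_singleton_of_mem hF₀] at this
    omega
  refine ⟨⟨hL.vertexOp w, by rw [hstep]; omega⟩, ?_, hcard⟩
  exact hlost.trans (Nat.add_le_add_right (hL.ncard_le_ncard_vertexOp w) 1)

lemma hstep_of_separates (hH : IsHyperforestCover G H) (hG' : G' = G.deleteEdges {s(x, y)})
    (hxy : G.Adj x y) (hxw : x ≠ w) (hyw : y ≠ w) (hsep : ¬ ReachableWithin G' {w}ᶜ x y) :
    IsHyperforestCover G' (hstep G' s(x, y) w H) ∧
      SemiInvariantStep H.ncard (Nat.card G.ConnectedComponent) (hstep G' s(x, y) w H).ncard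
        (Nat.card G'.ConnectedComponent) := by
  obtain ⟨F₀, hF₀, hx, hy⟩ := hH.exists_mem hxy
  by_cases hreach : ReachableWithin G' F₀ x y
  · obtain ⟨hH', hf, hc⟩ := hH.hstep_of_reachableWithin hG' hxy hF₀ hx hy hxw hyw hsep hreach
    exact ⟨hH', Or.inl ⟨hf, hc⟩⟩
  · obtain ⟨hH', hf, hc⟩ := hH.hstep_of_not_reachableWithin (w := w) hG' hxy hF₀ hx hy hreach
    exact ⟨hH', Or.inr ⟨hf, hc⟩⟩

lemma hstep_of_erase (hH : IsHyperforestCover G H) {e : Sym2 V} {V₁ V₂ : Set V}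
    (he : e ∈ G.edgeSet) (hG' : G'.edgeSet = G.edgeSet \ {e}) (hdisj : Disjoint V₁ V₂)
    (hw₁ : w ∉ V₁) (hw₂ : w ∉ V₂) (hcover : V₁ ∪ V₂ ∪ {w} = Set.univ)
    (hxy : ∃ x ∈ V₁, ∃ y ∈ V₂, e = s(x, y))
    (hcross : ∀ x ∈ V₁, ∀ y ∈ V₂, G.Adj x y → s(x, y) = e) :
    IsHyperforestCover G' (hstep G' e w H) ∧
      SemiInvariantStep H.ncard (Nat.card G.ConnectedComponent) (hstep G' e w H).ncard
        (Nat.card G'.ConnectedComponent) := by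
  obtain ⟨x, hx, y, hy, rfl⟩ := hxy
  have hdel : G' = G.deleteEdges {s(x, y)} := edgeSet_inj.mp (by rw [hG', edgeSet_deleteEdges])
  refine hH.hstep_of_separates hdel he (fun h => hw₁ (h ▸ hx)) (fun h => hw₂ (h ▸ hy))
    (not_reachableWithin_compl_singleton hdisj hcover (fun a ha b hb hab => ?_) hx hy)
  rw [hdel, deleteEdges_adj] at hab
  exact hab.2 (hcross a ha b hb hab.1)

end IsHyperforestCover

end Step

lemma SemiInvariantStep.increases {f c f' c' : ℕ} (h : SemiInvariantStep f c f' c') :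
    f' + 2 * c' ≥ f + 2 * c + 1 ∧
      ∃ (lam : ℕ) (v : ℤ × ℤ),
        v ∈ ({(1, 0), (1, 1), (0, 1), (-1, 1)} : Set (ℤ × ℤ)) ∧
        (f' : ℤ) = (f : ℤ) + v.1 + lam ∧ (c' : ℤ) = (c : ℤ) + v.2 := by
  rcases h with ⟨hf, rfl⟩ | ⟨hf, rfl⟩
  · exact ⟨by omega, f' - (f + 1), (1, 0), by simp, by push_cast [Nat.cast_sub hf]; ring,
      by simp⟩
  · exact ⟨by omega, f' + 1 - f, (-1, 1), by simp, by push_cast [Nat.cast_sub hf]; ring,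
      by simp⟩

theorem semiInvariant_increases_general (s t : ℕ)
    (m : ℕ) (c : ℕ → SimpleGraph (Fin (s + t + 1)))
    (e : ℕ → Sym2 (Fin (s + t + 1))) (w : ℕ → Fin (s + t + 1))
    (hproc : ∀ i < m, e i ∈ (c i).edgeSet ∧
      (c (i + 1)).edgeSet = (c i).edgeSet \ {e i} ∧
      ∃ V1 V2 : Set (Fin (s + t + 1)),
        Disjoint V1 V2 ∧ w i ∉ V1 ∧ w i ∉ V2 ∧ V1 ∪ V2 ∪ {w i} = Set.univ ∧
        V1.ncard = s ∧ V2.ncard = t ∧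
        (∃ x ∈ V1, ∃ y ∈ V2, e i = s(x, y)) ∧
        ∀ x ∈ V1, ∀ y ∈ V2, (c i).Adj x y → s(x, y) = e i)
    (H : ℕ → Set (Set (Fin (s + t + 1))))
    (hH0 : H 0 = initialHyper (c 0))
    (hHstep : ∀ i < m, H (i + 1) = hstep (c (i + 1)) (e i) (w i) (H i))
    (f cc : ℕ → ℕ)
    (hf : ∀ i, f i = (H i).ncard)
    (hcc : ∀ i, cc i = Nat.card (hyperGraphOf (H i)).ConnectedComponent) :
    ∀ i < m,
      f (i + 1) + 2 * cc (i + 1) ≥ f i + 2 * cc i + 1 ∧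
      ∃ (lam : ℕ) (v : ℤ × ℤ),
        v ∈ ({(1, 0), (1, 1), (0, 1), (-1, 1)} : Set (ℤ × ℤ)) ∧
        (f (i + 1) : ℤ) = (f i : ℤ) + v.1 + lam ∧
        (cc (i + 1) : ℤ) = (cc i : ℤ) + v.2 := by
  have hsucc : ∀ i < m, IsHyperforestCover (c i) (H i) →
      IsHyperforestCover (c (i + 1)) (H (i + 1)) ∧
        SemiInvariantStep (H i).ncard (Nat.card (c i).ConnectedComponent) (H (i + 1)).ncard
          (Nat.card (c (i + 1)).ConnectedComponent) := by
    intro i hi hH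
    obtain ⟨he, hE, V1, V2, hdisj, hw1, hw2, hcover, -, -, hxy, hcross⟩ := hproc i hi
    rw [hHstep i hi]
    exact hH.hstep_of_erase he hE hdisj hw1 hw2 hcover hxy hcross
  have hinv : ∀ i ≤ m, IsHyperforestCover (c i) (H i) := by
    intro i
    induction i with
    | zero => exact fun _ => hH0 ▸ isHyperforestCover_initialHyper (c 0)
    | succ i ih => exact fun hi => (hsucc i hi (ih (Nat.le_of_succ_le hi))).1
  have hcc' : ∀ i ≤ m, cc i = Nat.card (c i).ConnectedComponent := fun i hi =>
    (hcc i).trans (hinv i hi).card_connectedComponent_hyperGraphOf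
  intro i hi
  rw [hf, hf, hcc' i hi.le, hcc' (i + 1) hi]
  exact (hsucc i hi (hinv i hi.le)).2.increases

/-- Along an erase process on `s+t+1` vertices, with the auxiliary hyperforests
`H i` built by the edge- and vertex-operations, the quantity `sᵢ = fᵢ + 2cᵢ`
strictly increases: `s_{i+1} ≥ s_i + 1`; equivalently each step changes `(f, c)` by
`v + (λ, 0)` for some `λ ≥ 0` and `v ∈ {(1,0), (1,1), (0,1), (−1,1)}`. -/
theorem semiInvariant_increases (s t : ℕ) (hs : 1 ≤ s) (ht : 1 ≤ t)
    (m : ℕ) (c : ℕ → SimpleGraph (Fin (s + t + 1)))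
    (e : ℕ → Sym2 (Fin (s + t + 1))) (w : ℕ → Fin (s + t + 1))
    (hend : c m = ⊥)
    (hproc : ∀ i < m, e i ∈ (c i).edgeSet ∧
      (c (i + 1)).edgeSet = (c i).edgeSet \ {e i} ∧
      ∃ V1 V2 : Set (Fin (s + t + 1)),
        Disjoint V1 V2 ∧ w i ∉ V1 ∧ w i ∉ V2 ∧ V1 ∪ V2 ∪ {w i} = Set.univ ∧
        V1.ncard = s ∧ V2.ncard = t ∧
        (∃ x ∈ V1, ∃ y ∈ V2, e i = s(x, y)) ∧
        ∀ x ∈ V1, ∀ y ∈ V2, (c i).Adj x y → s(x, y) = e i)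
    (H : ℕ → Set (Set (Fin (s + t + 1))))
    (hH0 : H 0 = initialHyper (c 0))
    (hHstep : ∀ i < m, H (i + 1) = hstep (c (i + 1)) (e i) (w i) (H i))
    (f cc : ℕ → ℕ)
    (hf : ∀ i, f i = (H i).ncard)
    (hcc : ∀ i, cc i = Nat.card (hyperGraphOf (H i)).ConnectedComponent) :
    ∀ i < m,
      f (i + 1) + 2 * cc (i + 1) ≥ f i + 2 * cc i + 1 ∧
      ∃ (lam : ℕ) (v : ℤ × ℤ),
        v ∈ ({(1, 0), (1, 1), (0, 1), (-1, 1)} : Set (ℤ × ℤ)) ∧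
        (f (i + 1) : ℤ) = (f i : ℤ) + v.1 + lam ∧
        (cc (i + 1) : ℤ) = (cc i : ℤ) + v.2 :=
  semiInvariant_increases_general s t m c e w hproc H hH0 hHstep f cc hf hcc
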